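/- arXiv:1710.07258 — 3 statements merged into one kernel-verified Lean document; each statement's English description precedes it below -/
import Mathlib

section
/- Let S = (X, →_Σ, ≤) be a WSTS with strong monotonicity. For every ideal I of X and every word w ∈ Σ*, the union of all ideals J such that I ⇒_w J in the completion of S equals ↓Post_w(I), the downward closure of the set of w-successors of I. -/
/-- A quasi-ordered set is a well-quasi-ordering if every infinite sequence
contains an increasing pair. -/
def IsWqo (X : Type*) [Preorder X] : Prop :=
  ∀ f : ℕ → X, ∃ i j : ℕ, i < j ∧ f i ≤ f j

/-- A subset is downwards-closed if it is closed under going down. -/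
def DownwardsClosed {X : Type*} [Preorder X] (D : Set X) : Prop :=
  ∀ ⦃x y : X⦄, x ≤ y → y ∈ D → x ∈ D

/-- An ideal is a nonempty, directed, downwards-closed subset. -/
def IsIdeal {X : Type*} [Preorder X] (I : Set X) : Prop :=
  I.Nonempty ∧ DownwardsClosed I ∧
    ∀ ⦃x⦄, x ∈ I → ∀ ⦃y⦄, y ∈ I → ∃ z ∈ I, x ≤ z ∧ y ≤ z

/-- The downward closure of a set. -/
def downCl {X : Type*} [Preorder X] (D : Set X) : Set X :=
  {x : X | ∃ y ∈ D, x ≤ y}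

/-- `Steps tr w x y` holds if `x →_w y`, i.e. reading the word `w` can lead
from state `x` to state `y`. -/
def Steps {X A : Type*} (tr : A → X → X → Prop) : List A → X → X → Prop
  | [], x, y => x = y
  | a :: w, x, y => ∃ z, tr a x z ∧ Steps tr w z y

/-- (Ordinary WSTS) monotonicity: a transition from a smaller state can be
simulated from a bigger state by some sequence of transitions. -/
def MonotoneTS {X A : Type*} [Preorder X] (tr : A → X → X → Prop) : Prop :=
  ∀ (a : A) (x y x' : X), tr a x y → x ≤ x' →
    ∃ (w : List A) (y' : X), Steps tr w x' y' ∧ y ≤ y'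

/-- A WSTS: the order is a wqo and the system is monotone. -/
def IsWSTS {X A : Type*} [Preorder X] (tr : A → X → X → Prop) : Prop :=
  IsWqo X ∧ MonotoneTS tr

/-- Strong monotonicity: a transition from a smaller state can be simulated by a
transition with the same label from a bigger state. -/
def StrongMonotone {X A : Type*} [Preorder X] (tr : A → X → X → Prop) : Prop :=
  ∀ (a : A) (x y x' : X), tr a x y → x ≤ x' → ∃ y', tr a x' y' ∧ y ≤ y'

/-- The immediate `a`-successors of a set of states. -/
def post {X A : Type*} (tr : A → X → X → Prop) (a : A) (I : Set X) : Set X :=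
  {y : X | ∃ x ∈ I, tr a x y}

/-- The `w`-successors of a set of states. -/
def postW {X A : Type*} (tr : A → X → X → Prop) (w : List A) (I : Set X) : Set X :=
  {y : X | ∃ x ∈ I, Steps tr w x y}

/-- One step `I ⇒_a J` of the completion: `J` is a maximal ideal included in
`↓Post_a(I)`. -/
def CompStep {X A : Type*} [Preorder X] (tr : A → X → X → Prop)
    (a : A) (I J : Set X) : Prop :=
  IsIdeal J ∧ J ⊆ downCl (post tr a I) ∧
    ∀ K : Set X, IsIdeal K → K ⊆ downCl (post tr a I) → J ⊆ K → J = K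

/-- `CompSteps tr w I J` holds if `I ⇒_w J` in the completion. -/
def CompSteps {X A : Type*} [Preorder X] (tr : A → X → X → Prop) :
    List A → Set X → Set X → Prop
  | [], I, J => I = J
  | a :: w, I, J => ∃ K, CompStep tr a I K ∧ CompSteps tr w K J

lemma steps_mono {X A : Type*} [Preorder X] {tr : A → X → X → Prop}
    (hsm : StrongMonotone tr) : ∀ (w : List A) (x y x' : X), Steps tr w x y → x ≤ x' →
    ∃ y', Steps tr w x' y' ∧ y ≤ y'
  | [], x, y, x', h, hle => ⟨x', rfl, (show x = y from h) ▸ hle⟩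
  | a :: w, x, y, x', ⟨z, hz, hs⟩, hle => by
    obtain ⟨z', hz', hzz⟩ := hsm a x z x' hz hle
    obtain ⟨y', hy', hyy⟩ := steps_mono hsm w z y z' hs hzz
    exact ⟨y', ⟨z', hz', hy'⟩, hyy⟩

lemma downCl_downwardsClosed {X : Type*} [Preorder X] (S : Set X) :
    DownwardsClosed (downCl S) := by
  rintro x y hxy ⟨z, hz, hyz⟩
  exact ⟨z, hz, hxy.trans hyz⟩

/-- Every element of a downwards-closed set belongs to some maximal ideal
included in that set. -/
lemma exists_maximal_ideal {X : Type*} [Preorder X] (D : Set X)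
    (hD : DownwardsClosed D) (m : X) (hm : m ∈ D) :
    ∃ J, IsIdeal J ∧ J ⊆ D ∧ m ∈ J ∧
      ∀ K, IsIdeal K → K ⊆ D → J ⊆ K → J = K := by
  set S : Set (Set X) := {J | IsIdeal J ∧ J ⊆ D} with hS
  have hchain : ∀ c ⊆ S, IsChain (· ⊆ ·) c → c.Nonempty →
      ∃ ub ∈ S, ∀ s ∈ c, s ⊆ ub := by
    intro c hcS hchain ⟨J0, hJ0⟩
    refine ⟨⋃₀ c, ⟨⟨?_, ?_, ?_⟩, ?_⟩, fun s hs => Set.subset_sUnion_of_mem hs⟩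
    · obtain ⟨x, hx⟩ := (hcS hJ0).1.1
      exact ⟨x, J0, hJ0, hx⟩
    · rintro x y hxy ⟨J, hJ, hy⟩
      exact ⟨J, hJ, (hcS hJ).1.2.1 hxy hy⟩
    · rintro x ⟨J1, hJ1, hx⟩ y ⟨J2, hJ2, hy⟩
      rcases hchain.total hJ1 hJ2 with h | h
      · obtain ⟨z, hz, h1, h2⟩ := (hcS hJ2).1.2.2 (h hx) hy
        exact ⟨z, ⟨J2, hJ2, hz⟩, h1, h2⟩
      · obtain ⟨z, hz, h1, h2⟩ := (hcS hJ1).1.2.2 hx (h hy)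
        exact ⟨z, ⟨J1, hJ1, hz⟩, h1, h2⟩
    · rintro x ⟨J, hJ, hx⟩
      exact (hcS hJ).2 hx
  have hmem : {x | x ≤ m} ∈ S := by
    refine ⟨⟨⟨m, le_refl m⟩, fun x y hxy hy => hxy.trans hy,
      fun x hx y hy => ⟨m, le_refl m, hx, hy⟩⟩, fun x hx => hD hx hm⟩
  obtain ⟨J, hsub, hJS, hmax⟩ := zorn_subset_nonempty S hchain _ hmem
  exact ⟨J, hJS.1, hJS.2, hsub (le_refl m),
    fun K hK hKD hJK => Set.Subset.antisymm hJK (hmax ⟨hK, hKD⟩ hJK)⟩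

lemma postW_cons {X A : Type*} (tr : A → X → X → Prop) (a : A) (w : List A)
    (I : Set X) : postW tr (a :: w) I = postW tr w (post tr a I) := by
  ext y
  constructor
  · rintro ⟨x, hx, z, hz, hs⟩
    exact ⟨z, ⟨x, hx, hz⟩, hs⟩
  · rintro ⟨z, ⟨x, hx, hz⟩, hs⟩
    exact ⟨x, hx, z, hz, hs⟩

/-- In a WSTS with strong monotonicity, the union of all the `w`-successors of
an ideal `I` in the completion is the downward closure of the set of
`w`-successors of `I`. -/
theorem sUnion_compSteps_eq_downCl_postW {X A : Type*} [Preorder X] [Finite A]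
    (tr : A → X → X → Prop) (hS : IsWSTS tr) (hsm : StrongMonotone tr)
    (I : Set X) (hI : IsIdeal I) (w : List A) :
    ⋃₀ {J : Set X | CompSteps tr w I J} = downCl (postW tr w I) := by
  induction w generalizing I with
  | nil =>
    ext y
    constructor
    · rintro ⟨J, hJ, hy⟩
      exact ⟨y, ⟨y, (show I = J from hJ) ▸ hy, rfl⟩, le_refl y⟩
    · rintro ⟨z, ⟨x, hx, hxz⟩, hyz⟩
      exact ⟨I, rfl, hI.2.1 hyz (hxz ▸ hx)⟩
  | cons a w ih =>
    ext y
    constructor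
    · rintro ⟨J, ⟨K, ⟨hKideal, hKsub, _⟩, hKJ⟩, hy⟩
      have hyJ : y ∈ ⋃₀ {J' : Set X | CompSteps tr w K J'} := ⟨J, hKJ, hy⟩
      rw [ih K hKideal] at hyJ
      obtain ⟨z, ⟨x, hxK, hs⟩, hyz⟩ := hyJ
      obtain ⟨x', ⟨u, hu, htu⟩, hxx'⟩ := hKsub hxK
      obtain ⟨z', hs', hzz'⟩ := steps_mono hsm w x z x' hs hxx'
      exact ⟨z', ⟨u, hu, x', htu, hs'⟩, hyz.trans hzz'⟩
    · rintro ⟨z, ⟨x, hx, m, htm, hs⟩, hyz⟩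
      have hmD : m ∈ downCl (post tr a I) := ⟨m, ⟨x, hx, htm⟩, le_refl m⟩
      obtain ⟨K, hKideal, hKsub, hmK, hKmax⟩ :=
        exists_maximal_ideal _ (downCl_downwardsClosed (post tr a I)) m hmD
      have hyK : y ∈ downCl (postW tr w K) := ⟨z, ⟨m, hmK, hs⟩, hyz⟩
      rw [← ih K hKideal] at hyK
      obtain ⟨J, hJ, hyJ⟩ := hyK
      exact ⟨J, ⟨K, ⟨hKideal, hKsub, hKmax⟩, hJ⟩, hyJ⟩
end

section
/- Let S = (X, →_Σ, ≤) be a WSTS with strong monotonicity whose completion is deterministic and has strong-strict monotonicity. Let I be an ideal of X, n ∈ ℕ, and w ∈ Σ⁺ a nonempty word. If I ⊊ w(I) and I ∈ Lim^n(X), then the acceleration w^∞(I) = ⋃_{k∈ℕ} w^k(I) belongs to Lim^{n+1}(X). -/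
/-- The completion is deterministic: each ideal has at most one `a`-successor. -/
def CompDeterministic {X A : Type*} [Preorder X] (tr : A → X → X → Prop) : Prop :=
  ∀ (a : A) (I J J' : Set X), CompStep tr a I J → CompStep tr a I J' → J = J'

/-- Strong-strict monotonicity of the completion: `I ⇒_a J` and `I' ⊇ I` imply
`I' ⇒_a J'` for some `J' ⊇ J`, which can moreover be chosen with `J' ⊋ J`
whenever `I' ⊋ I`. -/
def CompStrongStrictMono {X A : Type*} [Preorder X] (tr : A → X → X → Prop) : Prop :=
  ∀ (a : A) (I I' J : Set X), CompStep tr a I J → IsIdeal I' → I ⊆ I' →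
    ∃ J' : Set X, CompStep tr a I' J' ∧ J ⊆ J' ∧ (I ⊂ I' → J ⊂ J')

/-- The levels of the ideal completion: `Lim X 0` is the set of all ideals, and
`Lim X (n+1)` is the set of unions of acceleration candidates (infinite strictly
increasing sequences) of members of `Lim X n`. -/
def Lim (X : Type*) [Preorder X] : ℕ → Set (Set X)
  | 0 => {I : Set X | IsIdeal I}
  | n + 1 => {J : Set X | ∃ f : ℕ → Set X,
      (∀ i, f i ∈ Lim X n) ∧ (∀ i, f i ⊂ f (i + 1)) ∧ J = ⋃ i, f i}

section AccelAux

variable {X A : Type*} [Preorder X]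

lemma isIdeal_principal (x : X) : IsIdeal {y : X | y ≤ x} :=
  ⟨⟨x, le_refl x⟩, fun a b hab hb => le_trans hab hb,
   fun a ha b hb => ⟨x, le_refl x, ha, hb⟩⟩

lemma isIdeal_sUnion_chain {c : Set (Set X)} (hne : c.Nonempty)
    (hch : IsChain (· ⊆ ·) c) (hid : ∀ K ∈ c, IsIdeal K) : IsIdeal (⋃₀ c) := by
  obtain ⟨K0, hK0⟩ := hne
  refine ⟨?_, ?_, ?_⟩
  · obtain ⟨x, hx⟩ := (hid K0 hK0).1
    exact ⟨x, K0, hK0, hx⟩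
  · rintro x y hxy ⟨K, hK, hy⟩
    exact ⟨K, hK, (hid K hK).2.1 hxy hy⟩
  · rintro x ⟨K1, hK1, hx⟩ y ⟨K2, hK2, hy⟩
    rcases eq_or_ne K1 K2 with rfl | hne'
    · obtain ⟨z, hz, h1, h2⟩ := (hid K1 hK1).2.2 hx hy
      exact ⟨z, ⟨K1, hK1, hz⟩, h1, h2⟩
    · rcases hch hK1 hK2 hne' with h | h
      · obtain ⟨z, hz, h1, h2⟩ := (hid K2 hK2).2.2 (h hx) hy
        exact ⟨z, ⟨K2, hK2, hz⟩, h1, h2⟩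
      · obtain ⟨z, hz, h1, h2⟩ := (hid K1 hK1).2.2 hx (h hy)
        exact ⟨z, ⟨K1, hK1, hz⟩, h1, h2⟩

lemma isIdeal_iUnion {f : ℕ → Set X} (hid : ∀ i, IsIdeal (f i))
    (hmono : Monotone f) : IsIdeal (⋃ i, f i) := by
  refine ⟨?_, ?_, ?_⟩
  · obtain ⟨x, hx⟩ := (hid 0).1
    exact ⟨x, Set.mem_iUnion.2 ⟨0, hx⟩⟩
  · rintro x y hxy hy
    rw [Set.mem_iUnion] at hy ⊢
    obtain ⟨i, hi⟩ := hy
    exact ⟨i, (hid i).2.1 hxy hi⟩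
  · intro x hx y hy
    rw [Set.mem_iUnion] at hx hy
    obtain ⟨i, hi⟩ := hx
    obtain ⟨j, hj⟩ := hy
    obtain ⟨z, hz, h1, h2⟩ := (hid (max i j)).2.2
      (hmono (le_max_left i j) hi) (hmono (le_max_right i j) hj)
    exact ⟨z, Set.mem_iUnion.2 ⟨max i j, hz⟩, h1, h2⟩

lemma mono_of_strict {f : ℕ → Set X} (h : ∀ i, f i ⊂ f (i + 1)) : Monotone f :=
  monotone_nat_of_le_succ fun i => (h i).subset

lemma isIdeal_of_mem_lim : ∀ (n : ℕ) {I : Set X}, I ∈ Lim X n → IsIdeal I := by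
  intro n
  induction n with
  | zero => intro I h; exact h
  | succ n ih =>
    rintro I ⟨f, hf, hfs, rfl⟩
    exact isIdeal_iUnion (fun i => ih (hf i)) (mono_of_strict hfs)

lemma exists_maximal_ideal_s10 (tr : A → X → X → Prop) (a : A) (L L0 : Set X)
    (h0 : IsIdeal L0) (hsub : L0 ⊆ downCl (post tr a L)) :
    ∃ M, CompStep tr a L M ∧ L0 ⊆ M := by
  have hch : ∀ c ⊆ {K : Set X | IsIdeal K ∧ K ⊆ downCl (post tr a L)},
      IsChain (· ⊆ ·) c → c.Nonempty →
      ∃ ub ∈ {K : Set X | IsIdeal K ∧ K ⊆ downCl (post tr a L)},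
        ∀ s ∈ c, s ⊆ ub := by
    intro c hc hchain hne
    refine ⟨⋃₀ c, ⟨isIdeal_sUnion_chain hne hchain (fun K hK => (hc hK).1), ?_⟩,
      fun s hs => Set.subset_sUnion_of_mem hs⟩
    rintro x ⟨K, hK, hx⟩
    exact (hc hK).2 hx
  obtain ⟨M, hM0, hMmax⟩ := zorn_subset_nonempty
    {K : Set X | IsIdeal K ∧ K ⊆ downCl (post tr a L)} hch L0 ⟨h0, hsub⟩
  refine ⟨M, ⟨hMmax.prop.1, hMmax.prop.2, ?_⟩, hM0⟩
  intro K hK hKD hMK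
  exact hMmax.eq_of_subset ⟨hK, hKD⟩ hMK

lemma isIdeal_compSteps (tr : A → X → X → Prop) :
    ∀ (w : List A) (I K : Set X), IsIdeal I → CompSteps tr w I K → IsIdeal K
  | [], _, _, hI, h => h ▸ hI
  | _ :: w, _, K, _, ⟨K1, h1, h2⟩ => isIdeal_compSteps tr w K1 K h1.1 h2

lemma compSteps_det (tr : A → X → X → Prop) (hdet : CompDeterministic tr) :
    ∀ (w : List A) (I K K' : Set X), CompSteps tr w I K → CompSteps tr w I K' →
      K = K'
  | [], _, _, _, h, h' => h.symm.trans h'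
  | a :: w, I, K, K', ⟨K1, h1, h2⟩, ⟨K1', h1', h2'⟩ => by
    obtain rfl := hdet a I K1 K1' h1 h1'
    exact compSteps_det tr hdet w K1 K K' h2 h2'

lemma compSteps_ssm (tr : A → X → X → Prop) (hssm : CompStrongStrictMono tr) :
    ∀ (w : List A) (I I' K : Set X), CompSteps tr w I K → IsIdeal I' → I ⊆ I' →
      ∃ K', CompSteps tr w I' K' ∧ K ⊆ K' ∧ (I ⊂ I' → K ⊂ K')
  | [], I, I', K, h, hI', hsub => by
    subst h; exact ⟨I', rfl, hsub, id⟩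
  | a :: w, I, I', K, ⟨K1, h1, h2⟩, hI', hsub => by
    obtain ⟨K1', h1', hsub1, hstrict1⟩ := hssm a I I' K1 h1 hI' hsub
    obtain ⟨K', h2', hsub2, hstrict2⟩ :=
      compSteps_ssm tr hssm w K1 K1' K h2 h1'.1 hsub1
    exact ⟨K', ⟨K1', h1', h2'⟩, hsub2, fun hs => hstrict2 (hstrict1 hs)⟩

lemma lim_step (tr : A → X → X → Prop) (hdet : CompDeterministic tr)
    (hssm : CompStrongStrictMono tr) :
    ∀ (n : ℕ) (w : List A) (I K : Set X), I ∈ Lim X n → CompSteps tr w I K →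
      K ∈ Lim X n := by
  intro n
  induction n with
  | zero =>
    intro w I K hI h
    exact isIdeal_compSteps tr w I K hI h
  | succ n ih =>
    intro w
    induction w with
    | nil =>
      intro I K hI h
      exact h ▸ hI
    | cons a w' ihw =>
      rintro I K hI ⟨K1, hstep, hrest⟩
      refine ihw K1 K ?_ hrest
      obtain ⟨f, hf, hfs, hIeq⟩ := hI
      subst hIeq
      have hfideal : ∀ i, IsIdeal (f i) := fun i => isIdeal_of_mem_lim n (hf i)
      have hfmono : Monotone f := mono_of_strict hfs
      have hIideal : IsIdeal (⋃ i, f i) := isIdeal_iUnion hfideal hfmono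
      obtain ⟨y0, hy0⟩ := hstep.1.1
      obtain ⟨z0, hz0, hy0z⟩ := hstep.2.1 hy0
      obtain ⟨x0, hx0, htr0⟩ := hz0
      rw [Set.mem_iUnion] at hx0
      obtain ⟨N, hN⟩ := hx0
      have hex : ∀ j : ℕ, ∃ M, CompStep tr a (f (N + j)) M := by
        intro j
        obtain ⟨M, hM, -⟩ := exists_maximal_ideal_s10 tr a (f (N + j)) {y | y ≤ z0}
          (isIdeal_principal z0)
          (fun y hy => ⟨z0, ⟨x0, hfmono (Nat.le_add_right N j) hN, htr0⟩, hy⟩)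
        exact ⟨M, hM⟩
      choose M hM using hex
      refine ⟨M, ?_, ?_, ?_⟩
      · intro j
        exact ih [a] (f (N + j)) (M j) (hf (N + j)) ⟨M j, hM j, rfl⟩
      · intro j
        obtain ⟨M', hM', hsub, hstrict⟩ := hssm a (f (N + j)) (f (N + j + 1))
          (M j) (hM j) (hfideal (N + j + 1)) (hfs (N + j)).subset
        have he : M' = M (j + 1) :=
          hdet a (f (N + j + 1)) M' (M (j + 1)) hM' (hM (j + 1))
        rw [← he]
        exact hstrict (hfs (N + j))
      · refine Set.Subset.antisymm ?_ ?_
        · intro y hy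
          obtain ⟨z', hz', hyz⟩ := hstep.2.1 hy
          obtain ⟨x', hx', htr'⟩ := hz'
          rw [Set.mem_iUnion] at hx'
          obtain ⟨m, hm⟩ := hx'
          obtain ⟨M', hM', hyM'⟩ := exists_maximal_ideal_s10 tr a (f (N + m))
            {u | u ≤ y} (isIdeal_principal y)
            (fun u hu => ⟨z', ⟨x', hfmono (Nat.le_add_left m N) hm, htr'⟩,
              le_trans hu hyz⟩)
          have he : M' = M m := hdet a (f (N + m)) M' (M m) hM' (hM m)
          exact Set.mem_iUnion.2 ⟨m, he ▸ hyM' (le_refl y)⟩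
        · intro y hy
          rw [Set.mem_iUnion] at hy
          obtain ⟨j, hj⟩ := hy
          obtain ⟨K', hK', hsub, -⟩ := hssm a (f (N + j)) (⋃ i, f i) (M j)
            (hM j) hIideal (Set.subset_iUnion f (N + j))
          have he : K' = K1 := hdet a (⋃ i, f i) K' K1 hK' hstep
          exact he ▸ hsub hj

end AccelAux


/-- In a WSTS with strong monotonicity whose completion is deterministic with
strong-strict monotonicity, accelerating an ideal increases its level: if
`I ∈ Lim^n(X)` and `I ⊊ w(I)`, then `w^∞(I) = ⋃_k w^k(I) ∈ Lim^{n+1}(X)`.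
The iterates `w^k(I)` are given by the (unique, by determinism) family `J` with
`J 0 = I` and `J k ⇒_w J (k+1)` for every `k`. -/
theorem acceleration_increases_level {X A : Type*} [Preorder X] [Finite A]
    (tr : A → X → X → Prop) (hS : IsWSTS tr) (hsm : StrongMonotone tr)
    (hdet : CompDeterministic tr) (hssm : CompStrongStrictMono tr)
    (I : Set X) (hI : IsIdeal I) (n : ℕ) (hIn : I ∈ Lim X n)
    (w : List A) (hw : w ≠ [])
    (J : ℕ → Set X) (hJ0 : J 0 = I)
    (hJstep : ∀ k : ℕ, CompSteps tr w (J k) (J (k + 1)))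
    (haccel : I ⊂ J 1) :
    (⋃ k : ℕ, J k) ∈ Lim X (n + 1) := by
  have hJlim : ∀ k, J k ∈ Lim X n := by
    intro k
    induction k with
    | zero => rw [hJ0]; exact hIn
    | succ k ihk => exact lim_step tr hdet hssm n w (J k) (J (k + 1)) ihk (hJstep k)
  have hJideal : ∀ k, IsIdeal (J k) := fun k => isIdeal_of_mem_lim n (hJlim k)
  have hstrict : ∀ k, J k ⊂ J (k + 1) := by
    intro k
    induction k with
    | zero => rw [hJ0]; exact haccel
    | succ k ihk =>
      obtain ⟨K', hK', hsub, hst⟩ := compSteps_ssm tr hssm w (J k) (J (k + 1))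
        (J (k + 1)) (hJstep k) (hJideal (k + 1)) ihk.subset
      have he : K' = J (k + 2) :=
        compSteps_det tr hdet w (J (k + 1)) K' (J (k + 2)) hK' (hJstep (k + 1))
      exact he ▸ hst ihk
  exact ⟨J, hJlim, hstrict, rfl⟩
end

section
/- Let Σ be a finite nonempty alphabet and order the set Σ* of finite words over Σ by the (scattered) subword ordering ⪯. Then the set Idl(Σ*) of ideals of (Σ*, ⪯), partially ordered by inclusion (strict inclusion is well-founded since Idl(Σ*) is well-quasi-ordered by inclusion), has ordinal rank rk(Idl(Σ*)) = ω^{|Σ|} + 1. -/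
/-- `Σ*`: finite words over `σ`, ordered by the (scattered) subword ordering. -/
def Words (σ : Type*) : Type _ := List σ

/-- The subword (subsequence) partial ordering on words. -/
instance (σ : Type*) : PartialOrder (Words σ) where
  le u v := List.Sublist u v
  le_refl u := List.Sublist.refl u
  le_trans _ _ _ h₁ h₂ := List.Sublist.trans h₁ h₂
  le_antisymm _ _ h₁ h₂ := List.Sublist.antisymm h₁ h₂

/-- The set of ideals of `X`, partially ordered by inclusion. -/
def Idl (X : Type*) [Preorder X] : Type _ := {I : Set X // IsIdeal I}

noncomputable instance (X : Type*) [Preorder X] : PartialOrder (Idl X) :=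
  Subtype.partialOrder _

/-- The ordinal rank of an element of a preorder: `rk z = sup {rk y + 1 : y < z}`
when the strict order is well-founded (and `0` otherwise, by convention). -/
noncomputable def rk {Z : Type*} [Preorder Z] (z : Z) : Ordinal :=
  @dite _ (WellFounded ((· < ·) : Z → Z → Prop)) (Classical.dec _)
    (fun h => (h.apply z).rank) (fun _ => 0)

/-!
Every product `A₁ ⋯ Aₖ` of atoms `Γ*` and `{ε, a}` is an ideal of `(Σ*, ⪯)`; give `Γ*` degree
`|Γ|` and `{ε, a}` degree `0`, and measure a product by `∑ ω ^ deg Aᵢ`, summed in decreasing order.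

Upper bound. If `J ⊊ I ⊆ A₁ ⋯ Aₖ`, pick `w ∈ I ∖ J`. Writing `w = u v` with `u ∈ A₁` and
`v ∈ A₂ ⋯ Aₖ`, a word `x₁ x₂` of the product that does not dominate `w` has `u ⋠ x₁` or `v ⋠ x₂`,
so the words of `A₁ ⋯ Aₖ` not above `w` are covered by finitely many products in which one atom
was replaced by atoms of smaller degree. The ideal `J` lies in one of them, whose measure is
smaller, so by induction `rk I` is at most the measure of any product containing `I`; `Σ*` itself
is a product of measure `ω ^ |Σ|`.

Lower bound. For `Σ = {a₀, …, aₙ₋₁}` and `Γₜ = {a₀, …, aₜ₋₁}`, the ideals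
`(Γₙ₋₁* {ε, aₙ₋₁}) ^ cₙ₋₁ ⋯ (Γ₀* {ε, a₀}) ^ c₀` increase strictly with
`ω ^ (n - 1) cₙ₋₁ + ⋯ + c₀` (the word `aₙ₋₁ ^ cₙ₋₁ ⋯ a₀ ^ c₀` separates them) and stay strictly
below `Σ*`, whose rank is therefore at least `ω ^ n`. Higman's lemma makes strict inclusion of
ideals well-founded.
-/

section IdealsOfPreorder

variable {X : Type*} [Preorder X]

theorem IsIdeal.exists_subset_of_subset_biUnion {ι : Type*} {I : Set X} (hI : IsIdeal I)
    {D : ι → Set X} (hD : ∀ i, DownwardsClosed (D i)) :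
    ∀ {F : List ι}, I ⊆ ⋃ i ∈ F, D i → ∃ i ∈ F, I ⊆ D i
  | [], hsub => by
    obtain ⟨x, hx⟩ := hI.1
    simpa using hsub hx
  | i₀ :: F, hsub => by
    by_cases h₀ : I ⊆ D i₀
    · exact ⟨i₀, List.mem_cons_self, h₀⟩
    obtain ⟨x₀, hx₀, hx₀D⟩ := Set.not_subset.1 h₀
    have hF : I ⊆ ⋃ i ∈ F, D i := by
      intro y hy
      obtain ⟨z, hz, hxz, hyz⟩ := hI.2.2 hx₀ hy
      obtain ⟨i, hi, hzi⟩ := Set.mem_iUnion₂.1 (hsub hz)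
      rcases List.mem_cons.1 hi with rfl | hi
      · exact absurd (hD i hxz hzi) hx₀D
      · exact Set.mem_iUnion₂.2 ⟨i, hi, hD i hyz hzi⟩
    obtain ⟨i, hi, hIi⟩ := IsIdeal.exists_subset_of_subset_biUnion hI hD hF
    exact ⟨i, List.mem_cons_of_mem i₀ hi, hIi⟩

instance [WellQuasiOrderedLE X] : WellFoundedLT (Idl X) := by
  refine ⟨wellFounded_iff_isEmpty_descending_chain.2 ⟨fun ⟨I, hI⟩ => ?_⟩⟩
  have hanti : StrictAnti I := strictAnti_nat_of_succ_lt hI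
  choose x hxI hxI' using fun n => Set.exists_of_ssubset (hI n)
  obtain ⟨m, n, hmn, hle⟩ := wellQuasiOrdered_le x
  exact hxI' m ((I (m + 1)).2.2.1 hle (hanti.antitone hmn (hxI n)))

end IdealsOfPreorder

section Rank

variable {Z : Type*} [Preorder Z] [WellFoundedLT Z]

theorem rk_eq_rank (z : Z) : rk z = IsWellFounded.rank (· < ·) z := by
  rw [rk, dif_pos wellFounded_lt]
  rfl

theorem le_rank_of_lt_imp_lt {ι : Type*} (f : ι → Z) (v : ι → Ordinal)
    (hf : ∀ i j, v i < v j → f i < f j) (hv : ∀ i, ∀ β < v i, ∃ j, v j = β) (i : ι) :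
    v i ≤ IsWellFounded.rank (· < ·) (f i) := by
  induction h : v i using WellFoundedLT.induction generalizing i with
  | _ α IH =>
    refine le_of_forall_lt fun β hβ => ?_
    obtain ⟨j, rfl⟩ := hv i β (h ▸ hβ)
    exact (IH _ hβ j rfl).trans_lt (IsWellFounded.rank_lt_of_rel (hf j i (h ▸ hβ)))

end Rank

theorem iSup_succ_rank_eq_of_isTop {Z : Type*} [PartialOrder Z] [WellFoundedLT Z] {t : Z}
    (ht : IsTop t) :
    ⨆ z : Z, Order.succ (IsWellFounded.rank (· < ·) z) =
      Order.succ (IsWellFounded.rank (· < ·) t) :=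
  le_antisymm (Ordinal.iSup_le fun z => Order.succ_le_succ
      (WellFoundedLT.rank_strictMono.monotone (ht z)))
    (Ordinal.le_iSup (fun z : Z => Order.succ (IsWellFounded.rank (· < ·) z)) t)

universe u

namespace Ordinal

theorem mul_add_lt_mul_add_of_lt {p a b x : Ordinal} (hx : x < p) (hab : a < b) (y : Ordinal) :
    p * a + x < p * b + y :=
  calc p * a + x < p * a + p := add_lt_add_right hx _
    _ = p * Order.succ a := (mul_succ p a).symm
    _ ≤ p * b := mul_le_mul_right (Order.succ_le_of_lt hab) _
    _ ≤ p * b + y := le_self_add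

theorem mul_add_le_mul_add_iff {p a b x y : Ordinal} (hx : x < p) (hy : y < p) :
    p * a + x ≤ p * b + y ↔ a < b ∨ a = b ∧ x ≤ y := by
  refine ⟨fun h => ?_, ?_⟩
  · rcases lt_trichotomy a b with hab | rfl | hab
    · exact Or.inl hab
    · exact Or.inr ⟨rfl, (add_le_add_iff_left _).1 h⟩
    · exact absurd h (mul_add_lt_mul_add_of_lt hy hab x).not_ge
  · rintro (hab | ⟨rfl, hxy⟩)
    · exact (mul_add_lt_mul_add_of_lt hx hab y).le
    · exact add_le_add_right hxy _

/-- `evalDigits m c = ω ^ (m - 1) * c (m - 1) + ⋯ + ω ^ 0 * c 0`. -/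
noncomputable def evalDigits : ℕ → (ℕ → ℕ) → Ordinal
  | 0, _ => 0
  | m + 1, c => ω ^ (m : Ordinal) * c m + evalDigits m c

theorem evalDigits_lt (m : ℕ) (c : ℕ → ℕ) : evalDigits m c < ω ^ (m : Ordinal) := by
  induction m with
  | zero => simp [evalDigits]
  | succ m ih =>
    rw [evalDigits, Nat.cast_succ, opow_add_one, ← add_zero (ω ^ (m : Ordinal) * ω)]
    exact mul_add_lt_mul_add_of_lt ih (natCast_lt_omega0 (c m)) 0

theorem evalDigits_congr {m : ℕ} {c d : ℕ → ℕ} (h : ∀ k < m, c k = d k) :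
    evalDigits m c = evalDigits m d := by
  induction m with
  | zero => rfl
  | succ m ih =>
    rw [evalDigits, evalDigits, h m m.lt_succ_self, ih fun k hk => h k (hk.trans m.lt_succ_self)]

theorem evalDigits_eq_zero {m : ℕ} {c : ℕ → ℕ} (h : ∀ k < m, c k = 0) : evalDigits m c = 0 := by
  induction m with
  | zero => rfl
  | succ m ih =>
    rw [evalDigits, h m m.lt_succ_self, ih fun k hk => h k (hk.trans m.lt_succ_self)]
    simp

theorem evalDigits_succ_le_iff {m : ℕ} {c d : ℕ → ℕ} :
    evalDigits.{u} (m + 1) c ≤ evalDigits (m + 1) d ↔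
      c m < d m ∨ c m = d m ∧ evalDigits.{u} m c ≤ evalDigits m d := by
  rw [evalDigits, evalDigits, mul_add_le_mul_add_iff (evalDigits_lt m c) (evalDigits_lt m d),
    Nat.cast_lt, Nat.cast_inj]

theorem evalDigits_lt_evalDigits_of_lex {m : ℕ} {c d : ℕ → ℕ}
    (h : Pi.Lex (· > ·) (· < ·) c d) (hm : ∀ k ≥ m, c k = d k) :
    evalDigits m c < evalDigits m d := by
  induction m with
  | zero =>
    obtain ⟨i, -, hi⟩ := h
    exact absurd (hm i i.zero_le) hi.ne
  | succ m ih =>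
    obtain ⟨i, hi, hci⟩ := h
    rcases lt_trichotomy i m with him | rfl | hmi
    · rw [evalDigits, evalDigits, hi m him]
      exact add_lt_add_right (ih fun k hk => (hk.lt_or_eq).elim
        (fun hk => hm k hk) fun hk => hk ▸ hi m him) _
    · exact mul_add_lt_mul_add_of_lt (evalDigits_lt _ c) (Nat.cast_lt.2 hci) _
    · exact absurd (hm i hmi) hci.ne

theorem exists_evalDigits_eq {m : ℕ} {α : Ordinal} (hα : α < ω ^ (m : Ordinal)) :
    ∃ c : ℕ → ℕ, evalDigits m c = α := by
  induction m generalizing α with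
  | zero => exact ⟨0, ((by simpa using hα) : α = 0).symm⟩
  | succ m ih =>
    have hpos : ω ^ (m : Ordinal) ≠ 0 := opow_ne_zero _ omega0_ne_zero
    obtain ⟨q, hq⟩ := lt_omega0.1 (
      (lt_mul_iff_div_lt hpos).1 (by rwa [← opow_add_one, ← Nat.cast_succ]))
    obtain ⟨c, hc⟩ := ih (mod_lt α hpos)
    classical
    refine ⟨Function.update c m q, ?_⟩
    rw [evalDigits, Function.update_self,
      evalDigits_congr fun k hk => Function.update_of_ne hk.ne _ _, hc, ← hq, div_add_mod]

end Ordinal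

theorem List.exists_eq_append_cons_of_mem {α : Type*} {a : α} {l : List α} (h : a ∈ l) :
    ∃ s t, l = s ++ a :: t ∧ a ∉ s := by
  induction l with
  | nil => cases h
  | cons b l ih =>
    by_cases hb : b = a
    · exact ⟨[], l, hb ▸ rfl, List.not_mem_nil⟩
    · obtain ⟨s, t, rfl, hs⟩ := ih ((List.mem_cons.1 h).resolve_left (Ne.symm hb))
      exact ⟨b :: s, t, rfl, by simp [hs, Ne.symm hb]⟩

namespace Words

open Ordinal

variable {σ : Type*}

-- `Language σ` and `Set (Words σ)` are both `Set (List σ)`.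
theorem isIdeal_iff {l : Language σ} : IsIdeal (X := Words σ) l ↔
    (∃ x, x ∈ l) ∧ (∀ ⦃x y : List σ⦄, x.Sublist y → y ∈ l → x ∈ l) ∧
      ∀ ⦃x⦄, x ∈ l → ∀ ⦃y⦄, y ∈ l → ∃ z ∈ l, x.Sublist z ∧ y.Sublist z :=
  Iff.rfl

theorem isIdeal_one : IsIdeal (X := Words σ) (1 : Language σ) := by
  refine isIdeal_iff.2 ⟨⟨[], rfl⟩, fun x y hxy hy => ?_, fun x hx y hy => ⟨[], rfl, ?_, ?_⟩⟩
  · exact List.sublist_nil.1 ((Language.mem_one y).1 hy ▸ hxy)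
  · exact (Language.mem_one x).1 hx ▸ List.Sublist.refl _
  · exact (Language.mem_one y).1 hy ▸ List.Sublist.refl _

theorem isIdeal_mul {l m : Language σ} (hl : IsIdeal (X := Words σ) l)
    (hm : IsIdeal (X := Words σ) m) : IsIdeal (X := Words σ) (l * m) := by
  obtain ⟨⟨u, hu⟩, hl_down, hl_dir⟩ := isIdeal_iff.1 hl
  obtain ⟨⟨v, hv⟩, hm_down, hm_dir⟩ := isIdeal_iff.1 hm
  refine isIdeal_iff.2
    ⟨⟨u ++ v, Language.append_mem_mul hu hv⟩, fun x y hxy hy => ?_, fun x hx y hy => ?_⟩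
  · obtain ⟨y₁, hy₁, y₂, hy₂, rfl⟩ := Language.mem_mul.1 hy
    obtain ⟨x₁, x₂, rfl, hx₁, hx₂⟩ := List.sublist_append_iff.1 hxy
    exact Language.append_mem_mul (hl_down hx₁ hy₁) (hm_down hx₂ hy₂)
  · obtain ⟨x₁, hx₁, x₂, hx₂, rfl⟩ := Language.mem_mul.1 hx
    obtain ⟨y₁, hy₁, y₂, hy₂, rfl⟩ := Language.mem_mul.1 hy
    obtain ⟨z₁, hz₁, hxz₁, hyz₁⟩ := hl_dir hx₁ hy₁
    obtain ⟨z₂, hz₂, hxz₂, hyz₂⟩ := hm_dir hx₂ hy₂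
    exact ⟨z₁ ++ z₂, Language.append_mem_mul hz₁ hz₂, hxz₁.append hxz₂, hyz₁.append hyz₂⟩

theorem isIdeal_pow {l : Language σ} (hl : IsIdeal (X := Words σ) l) :
    ∀ n : ℕ, IsIdeal (X := Words σ) (l ^ n)
  | 0 => isIdeal_one
  | n + 1 => by rw [pow_succ]; exact isIdeal_mul (isIdeal_pow hl n) hl

theorem isIdeal_list_prod :
    ∀ {L : List (Language σ)}, (∀ l ∈ L, IsIdeal (X := Words σ) l) →
      IsIdeal (X := Words σ) L.prod
  | [], _ => isIdeal_one
  | l :: L, h => by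
    rw [List.prod_cons]
    exact isIdeal_mul (h l List.mem_cons_self)
      (isIdeal_list_prod fun l' hl' => h l' (List.mem_cons_of_mem l hl'))

def starLang (Γ : Set σ) : Language σ := {w | ∀ a ∈ w, a ∈ Γ}

def optLang (a : σ) : Language σ := {w | w.Sublist [a]}

theorem isIdeal_starLang (Γ : Set σ) : IsIdeal (X := Words σ) (starLang Γ) := by
  refine isIdeal_iff.2 ⟨⟨[], fun a ha => absurd ha List.not_mem_nil⟩,
    fun x y hxy hy a ha => hy a (hxy.mem ha), fun x hx y hy => ⟨x ++ y, fun a ha => ?_,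
      List.sublist_append_left x y, List.sublist_append_right x y⟩⟩
  rcases List.mem_append.1 ha with ha | ha
  exacts [hx a ha, hy a ha]

theorem isIdeal_optLang (a : σ) : IsIdeal (X := Words σ) (optLang a) :=
  isIdeal_iff.2 ⟨⟨[a], List.Sublist.refl _⟩, fun _ _ hxy hy => List.Sublist.trans hxy hy,
    fun _ hx _ hy => ⟨[a], List.Sublist.refl _, hx, hy⟩⟩

theorem one_le_of_isIdeal {l : Language σ} (hl : IsIdeal (X := Words σ) l) : 1 ≤ l := by
  rintro _ rfl
  obtain ⟨⟨x, hx⟩, hdown, -⟩ := isIdeal_iff.1 hl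
  exact hdown (List.nil_sublist x) hx

theorem mul_le_starLang {Γ : Set σ} {l m : Language σ} (hl : l ≤ starLang Γ)
    (hm : m ≤ starLang Γ) : l * m ≤ starLang Γ := by
  rintro _ ⟨x, hx, y, hy, rfl⟩ a ha
  rcases List.mem_append.1 ha with ha | ha
  exacts [hl hx a ha, hm hy a ha]

theorem pow_le_starLang {Γ : Set σ} {l : Language σ} (hl : l ≤ starLang Γ) :
    ∀ n : ℕ, l ^ n ≤ starLang Γ
  | 0 => by rintro _ rfl a ha; cases ha
  | n + 1 => by rw [pow_succ]; exact mul_le_starLang (pow_le_starLang hl n) hl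

theorem starLang_mono {Γ Δ : Set σ} (h : Γ ⊆ Δ) : starLang Γ ≤ starLang Δ :=
  fun _ hx a ha => h (hx a ha)

inductive Atom (σ : Type*)
  | star (Γ : Finset σ)
  | letter (a : σ)

namespace Atom

def lang : Atom σ → Language σ
  | star Γ => starLang Γ
  | letter a => optLang a

def deg : Atom σ → ℕ
  | star Γ => Γ.card
  | letter _ => 0

theorem isIdeal_lang : ∀ A : Atom σ, IsIdeal (X := Words σ) A.lang
  | star Γ => isIdeal_starLang (Γ : Set σ)
  | letter a => isIdeal_optLang a

end Atom

def prodLang (P : List (Atom σ)) : Language σ := (P.map Atom.lang).prod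

@[simp]
theorem prodLang_nil : prodLang ([] : List (Atom σ)) = 1 := rfl

@[simp]
theorem prodLang_cons (A : Atom σ) (P : List (Atom σ)) :
    prodLang (A :: P) = A.lang * prodLang P := by
  simp [prodLang]

@[simp]
theorem prodLang_append (P Q : List (Atom σ)) : prodLang (P ++ Q) = prodLang P * prodLang Q := by
  simp [prodLang]

theorem isIdeal_prodLang (P : List (Atom σ)) : IsIdeal (X := Words σ) (prodLang P) :=
  isIdeal_list_prod fun _ hl => by
    obtain ⟨A, -, rfl⟩ := List.mem_map.1 hl
    exact A.isIdeal_lang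

instance [Finite σ] : WellQuasiOrderedLE (Words σ) := by
  refine ⟨fun f => ?_⟩
  have higman := (Set.finite_univ (α := σ)).partiallyWellOrderedOn
    (r := (· = ·)) |>.partiallyWellOrderedOn_sublistForall₂ (· = ·)
  obtain ⟨m, n, hmn, hsub⟩ := higman fun n => ⟨f n, fun a _ => Set.mem_univ a⟩
  obtain ⟨l, hl, hln⟩ := List.sublistForall₂_iff.1 hsub
  rw [List.forall₂_eq_eq_eq] at hl
  subst hl
  exact ⟨m, n, hmn, hln⟩

open Atom

def degCount (P : List (Atom σ)) (k : ℕ) : ℕ := P.countP (·.deg = k)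

/-- Lexicographic comparison of the degree counts, highest degree first. -/
def DegLT (P' P : List (Atom σ)) : Prop := Pi.Lex (· > ·) (· < ·) (degCount P') (degCount P)

theorem degCount_cons (A : Atom σ) (P : List (Atom σ)) (k : ℕ) :
    degCount (A :: P) k = degCount P k + if A.deg = k then 1 else 0 := by
  simp [degCount, List.countP_cons]

theorem degCount_append (P Q : List (Atom σ)) (k : ℕ) :
    degCount (P ++ Q) k = degCount P k + degCount Q k :=
  List.countP_append

theorem DegLT.cons {P' P : List (Atom σ)} (A : Atom σ) (h : DegLT P' P) :
    DegLT (A :: P') (A :: P) := by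
  obtain ⟨g, hg, hlt⟩ := h
  exact ⟨g, fun k hk => by rw [degCount_cons, degCount_cons, hg k hk],
    by rw [degCount_cons, degCount_cons]; omega⟩

theorem degLT_append_cons {L R : List (Atom σ)} {A : Atom σ} (h : ∀ B ∈ L, B.deg < A.deg) :
    DegLT (L ++ R) (A :: R) := by
  have hL : ∀ k, A.deg ≤ k → degCount L k = 0 := fun k hk =>
    List.countP_eq_zero.2 fun B hB => by simpa using ((h B hB).trans_le hk).ne
  refine ⟨A.deg, fun k hk => ?_, ?_⟩
  · rw [degCount_append, hL k hk.le, degCount_cons, if_neg hk.ne, zero_add, add_zero]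
  · rw [degCount_append, hL _ le_rfl, degCount_cons, if_pos rfl]
    omega

section Cover

variable [DecidableEq σ]

/-- Products covering the words of `Γ*` that avoid `w`: the `i`-th one is
`(Γ ∖ w₀)* {ε, w₀} ⋯ (Γ ∖ wᵢ₋₁)* {ε, wᵢ₋₁} (Γ ∖ wᵢ)*`. -/
def starAvoidCover (Γ : Finset σ) : List σ → List (List (Atom σ))
  | [] => []
  | c :: w => [star (Γ.erase c)] :: (starAvoidCover Γ w).map (star (Γ.erase c) :: letter c :: ·)

theorem deg_lt_of_mem_starAvoidCover {Γ : Finset σ} :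
    ∀ {w : List σ}, w ∈ starLang ↑Γ → ∀ L ∈ starAvoidCover Γ w, ∀ B ∈ L, B.deg < Γ.card
  | [], _, L, hL => by simp [starAvoidCover] at hL
  | c :: w, hw, L, hL => by
    have hc : c ∈ Γ := hw c List.mem_cons_self
    have herase : (star (Γ.erase c)).deg < Γ.card := Finset.card_erase_lt_of_mem hc
    simp only [starAvoidCover, List.mem_cons, List.mem_map] at hL
    rcases hL with rfl | ⟨L, hL, rfl⟩
    · simpa using herase
    · intro B hB
      rcases List.mem_cons.1 hB with rfl | hB
      · exact herase
      rcases List.mem_cons.1 hB with rfl | hB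
      · exact Finset.card_pos.2 ⟨c, hc⟩
      exact deg_lt_of_mem_starAvoidCover (fun a ha => hw a (List.mem_cons_of_mem c ha)) L hL B hB

theorem exists_mem_starAvoidCover {Γ : Finset σ} :
    ∀ {w x : List σ}, x ∈ starLang ↑Γ → ¬ w.Sublist x →
      ∃ L ∈ starAvoidCover Γ w, x ∈ prodLang L
  | [], _, _, hwx => absurd (List.nil_sublist _) hwx
  | c :: w, x, hx, hwx => by
    have mem_erase {s : List σ} (hs : s ∈ starLang ↑Γ) (hcs : c ∉ s) :
        s ∈ (star (Γ.erase c)).lang := fun a ha =>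
      Finset.mem_erase.2 ⟨fun h => hcs (h ▸ ha), hs a ha⟩
    by_cases hcx : c ∈ x
    · obtain ⟨s, t, rfl, hcs⟩ := List.exists_eq_append_cons_of_mem hcx
      have hwt : ¬ w.Sublist t := fun h =>
        hwx ((h.cons_cons c).trans (List.sublist_append_right s _))
      obtain ⟨L, hL, htL⟩ := exists_mem_starAvoidCover
        (fun a ha => hx a (List.mem_append_right s (List.mem_cons_of_mem c ha))) hwt
      refine ⟨_, List.mem_cons_of_mem _ (List.mem_map_of_mem hL), ?_⟩
      rw [prodLang_cons, prodLang_cons]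
      exact Language.append_mem_mul
        (mem_erase (fun a ha => hx a (List.mem_append_left _ ha)) hcs)
        (Language.append_mem_mul (l := (letter c).lang) (List.Sublist.refl [c]) htL)
    · exact ⟨_, List.mem_cons_self, by simpa [prodLang] using mem_erase hx hcx⟩

def Atom.avoidCover : Atom σ → List σ → List (List (Atom σ))
  | star Γ, w => starAvoidCover Γ w
  | letter _, _ => [[]]

theorem Atom.deg_lt_of_mem_avoidCover {A : Atom σ} {w : List σ} (hw : w ∈ A.lang) :
    ∀ L ∈ A.avoidCover w, ∀ B ∈ L, B.deg < A.deg := by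
  cases A with
  | star Γ => exact deg_lt_of_mem_starAvoidCover hw
  | letter a => simp [avoidCover]

theorem Atom.exists_mem_avoidCover {A : Atom σ} {w x : List σ} (hw : w ∈ A.lang)
    (hx : x ∈ A.lang) (hwx : ¬ w.Sublist x) : ∃ L ∈ A.avoidCover w, x ∈ prodLang L := by
  cases A with
  | star Γ => exact exists_mem_starAvoidCover hx hwx
  | letter a =>
    refine ⟨[], List.mem_singleton_self _, ?_⟩
    rcases List.sublist_singleton.1 hx with rfl | rfl
    · rfl
    · exact absurd hw hwx

theorem exists_avoidCover :
    ∀ (P : List (Atom σ)) {w : List σ}, w ∈ prodLang P →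
      ∃ F : List (List (Atom σ)), (∀ P' ∈ F, DegLT P' P) ∧
        ∀ x ∈ prodLang P, ¬ w.Sublist x → ∃ P' ∈ F, x ∈ prodLang P'
  | [], w, hw => ⟨[], by simp, fun x _ hwx =>
    (hwx ((Language.mem_one w).1 hw ▸ x.nil_sublist)).elim⟩
  | A :: R, w, hw => by
    rw [prodLang_cons] at hw
    obtain ⟨u, hu, v, hv, rfl⟩ := Language.mem_mul.1 hw
    obtain ⟨F, hFlt, hFcov⟩ := exists_avoidCover R hv
    refine ⟨(A.avoidCover u).map (· ++ R) ++ F.map (A :: ·), ?_, fun x hx hwx => ?_⟩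
    · simp only [List.mem_append, List.mem_map]
      rintro _ (⟨L, hL, rfl⟩ | ⟨P', hP', rfl⟩)
      · exact degLT_append_cons (Atom.deg_lt_of_mem_avoidCover hu L hL)
      · exact (hFlt P' hP').cons A
    rw [prodLang_cons] at hx
    obtain ⟨x₁, hx₁, x₂, hx₂, rfl⟩ := Language.mem_mul.1 hx
    by_cases hux : u.Sublist x₁
    · obtain ⟨P', hP', hx₂P'⟩ := hFcov x₂ hx₂ fun hvx => hwx (hux.append hvx)
      refine ⟨A :: P', by simp [hP'], ?_⟩
      rw [prodLang_cons]
      exact Language.append_mem_mul hx₁ hx₂P'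
    · obtain ⟨L, hL, hx₁L⟩ := Atom.exists_mem_avoidCover hu hx₁ hux
      refine ⟨L ++ R, by simp [hL], ?_⟩
      rw [prodLang_append]
      exact Language.append_mem_mul hx₁L hx₂

end Cover

section UpperBound

variable [Fintype σ]

theorem Atom.deg_le_card : ∀ A : Atom σ, A.deg ≤ Fintype.card σ
  | star Γ => Γ.card_le_univ
  | letter _ => Nat.zero_le _

theorem degCount_eq_zero {P : List (Atom σ)} {k : ℕ} (hk : Fintype.card σ < k) :
    degCount P k = 0 :=
  List.countP_eq_zero.2 fun A _ => by simpa using ((A.deg_le_card).trans_lt hk).ne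

theorem DegLT.evalDigits_lt {P' P : List (Atom σ)} (h : DegLT P' P) :
    evalDigits (Fintype.card σ + 1) (degCount P') <
      evalDigits (Fintype.card σ + 1) (degCount P) :=
  evalDigits_lt_evalDigits_of_lex h fun _ hk => by
    rw [degCount_eq_zero hk, degCount_eq_zero hk]

theorem evalDigits_degCount_star_univ :
    evalDigits (Fintype.card σ + 1) (degCount [star (Finset.univ : Finset σ)]) =
      ω ^ (Fintype.card σ : Ordinal) := by
  have hcount (k : ℕ) : degCount [star (Finset.univ : Finset σ)] k =
      if Fintype.card σ = k then 1 else 0 := by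
    by_cases h : Fintype.card σ = k <;> simp [degCount, deg, h]
  rw [evalDigits, evalDigits_eq_zero fun k hk => by rw [hcount, if_neg hk.ne'], hcount,
    if_pos rfl, Nat.cast_one, mul_one, add_zero]

theorem mem_prodLang_star_univ (x : List σ) : x ∈ prodLang [star (Finset.univ : Finset σ)] := by
  rw [prodLang_cons, prodLang_nil, mul_one]
  exact fun a _ => Finset.mem_coe.2 (Finset.mem_univ a)

theorem rank_le_evalDigits_of_subset [DecidableEq σ] (P : List (Atom σ)) (I : Idl (Words σ))
    (hI : I.1 ⊆ (prodLang P : Set (Words σ))) :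
    IsWellFounded.rank (· < ·) I ≤ evalDigits (Fintype.card σ + 1) (degCount P) := by
  induction hP : evalDigits (Fintype.card σ + 1) (degCount P) using WellFoundedLT.induction
    generalizing P I with
  | _ o IH =>
    rw [IsWellFounded.rank_eq]
    refine Ordinal.iSup_le fun ⟨J, hJI⟩ => Order.succ_le_of_lt ?_
    obtain ⟨w, hwI, hwJ⟩ := Set.exists_of_ssubset hJI
    obtain ⟨F, hFlt, hFcov⟩ := exists_avoidCover P (hI hwI)
    have hJF : J.1 ⊆ ⋃ P' ∈ F, (prodLang P' : Set (Words σ)) := fun x hx =>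
      let ⟨P', hP'F, hxP'⟩ := hFcov x (hI (hJI.1 hx)) fun hwx => hwJ (J.2.2.1 hwx hx)
      Set.mem_iUnion₂.2 ⟨P', hP'F, hxP'⟩
    obtain ⟨P', hP'F, hJP'⟩ :=
      J.2.exists_subset_of_subset_biUnion (fun P' => (isIdeal_prodLang P').2.1) hJF
    have hlt := hP ▸ (hFlt P' hP'F).evalDigits_lt
    exact (IH _ hlt P' J hJP' rfl).trans_lt hlt

theorem rank_le_omega0_opow (I : Idl (Words σ)) :
    IsWellFounded.rank (· < ·) I ≤ ω ^ (Fintype.card σ : Ordinal) := by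
  classical
  exact evalDigits_degCount_star_univ (σ := σ) ▸
    rank_le_evalDigits_of_subset _ I fun x _ => mem_prodLang_star_univ x

end UpperBound

def block (Γ : Set σ) (a : σ) : Language σ := starLang Γ * optLang a

theorem isIdeal_block (Γ : Set σ) (a : σ) : IsIdeal (X := Words σ) (block Γ a) :=
  isIdeal_mul (isIdeal_starLang Γ) (isIdeal_optLang a)

theorem starLang_le_block (Γ : Set σ) (a : σ) : starLang Γ ≤ block Γ a := fun x hx =>
  List.append_nil x ▸ Language.append_mem_mul hx (List.nil_sublist [a])

theorem block_le_starLang {Γ : Set σ} {a : σ} (ha : a ∈ Γ) : block Γ a ≤ starLang Γ :=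
  mul_le_starLang le_rfl fun _ hx _ hb => (List.mem_singleton.1 (hx.mem hb)) ▸ ha

theorem replicate_append_mem_block_pow_mul {Γ : Set σ} {a : σ} (ha : a ∉ Γ) {m : Language σ}
    (hm : m ≤ starLang Γ) {w : List σ} (hw : a ∉ w) :
    ∀ {k e : ℕ}, List.replicate e a ++ w ∈ block Γ a ^ k * m → e < k ∨ e = k ∧ w ∈ m
  | 0, e, h => by
    rw [pow_zero, one_mul] at h
    cases e with
    | zero => exact Or.inr ⟨rfl, h⟩
    | succ e => exact absurd (hm h a (by simp)) ha
  | k + 1, 0, _ => Or.inl k.succ_pos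
  | k + 1, e + 1, h => by
    rw [pow_succ', mul_assoc] at h
    obtain ⟨_, ⟨s, hs, o, ho, rfl⟩, r, hr, he⟩ := Language.mem_mul.1 h
    have hs_nil : s = [] := by
      cases s with
      | nil => rfl
      | cons b s =>
        have hb : b = a := by simpa [List.replicate_succ] using congrArg List.head? he
        exact absurd (hb ▸ hs b List.mem_cons_self) ha
    subst hs_nil
    rcases List.sublist_singleton.1 ho with rfl | rfl
    · simp only [List.nil_append] at he
      subst he
      rcases replicate_append_mem_block_pow_mul ha hm hw hr with h | ⟨rfl, -⟩ <;>
        exact Or.inl (by omega)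
    · simp only [List.nil_append, List.replicate_succ, List.cons_append, List.cons.injEq,
        true_and] at he
      subst he
      rcases replicate_append_mem_block_pow_mul ha hm hw hr with hlt | ⟨rfl, hwm⟩
      exacts [Or.inl (by omega), Or.inr ⟨rfl, hwm⟩]

/-- For `ℓ = [aₜ₋₁, …, a₀]`, the language
`({aₜ₋₂, …, a₀}* {ε, aₜ₋₁})^{c (t - 1)} ⋯ ({ε, a₀})^{c 0}`. -/
def chainLang : List σ → (ℕ → ℕ) → Language σ
  | [], _ => 1
  | a :: ℓ, c => block {b | b ∈ ℓ} a ^ c ℓ.length * chainLang ℓ c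

/-- For `ℓ = [aₜ₋₁, …, a₀]`, the word `aₜ₋₁^{c (t - 1)} ⋯ a₀^{c 0}`. -/
def chainWitness : List σ → (ℕ → ℕ) → List σ
  | [], _ => []
  | a :: ℓ, c => List.replicate (c ℓ.length) a ++ chainWitness ℓ c

theorem isIdeal_chainLang : ∀ (ℓ : List σ) (c : ℕ → ℕ), IsIdeal (X := Words σ) (chainLang ℓ c)
  | [], _ => isIdeal_one
  | a :: ℓ, c => isIdeal_mul (isIdeal_pow (isIdeal_block _ a) _) (isIdeal_chainLang ℓ c)

theorem chainLang_le_starLang :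
    ∀ (ℓ : List σ) (c : ℕ → ℕ), chainLang ℓ c ≤ starLang {b | b ∈ ℓ}
  | [], _ => by rintro _ rfl a ha; cases ha
  | a :: ℓ, c => by
    have hsub : {b | b ∈ ℓ} ⊆ {b | b ∈ a :: ℓ} := fun b hb => List.mem_cons_of_mem a hb
    refine mul_le_starLang (pow_le_starLang ?_ _)
      ((chainLang_le_starLang ℓ c).trans (starLang_mono hsub))
    exact (mul_le_mul_left (starLang_mono hsub) _).trans (block_le_starLang List.mem_cons_self)

theorem replicate_mem_block_pow (Γ : Set σ) (a : σ) :
    ∀ n : ℕ, List.replicate n a ∈ block Γ a ^ n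
  | 0 => rfl
  | n + 1 => by
    rw [pow_succ']
    exact Language.append_mem_mul (Language.append_mem_mul (l := starLang Γ) (m := optLang a)
      (a := []) (fun _ h => absurd h List.not_mem_nil) (List.Sublist.refl [a]))
      (replicate_mem_block_pow Γ a n)

theorem chainWitness_mem : ∀ (ℓ : List σ) (c : ℕ → ℕ), chainWitness ℓ c ∈ chainLang ℓ c
  | [], _ => rfl
  | a :: ℓ, c => Language.append_mem_mul (replicate_mem_block_pow _ a _) (chainWitness_mem ℓ c)

theorem chainLang_mono : ∀ {ℓ : List σ} {c d : ℕ → ℕ},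
    evalDigits ℓ.length c ≤ evalDigits ℓ.length d → chainLang ℓ c ≤ chainLang ℓ d
  | [], _, _, _ => le_rfl
  | a :: ℓ, c, d, h => by
    rcases evalDigits_succ_le_iff.1 h with hlt | ⟨heq, hle⟩
    · have one_le_block : 1 ≤ block {b | b ∈ ℓ} a := one_le_of_isIdeal (isIdeal_block _ a)
      calc chainLang (a :: ℓ) c
          = block {b | b ∈ ℓ} a ^ c ℓ.length * chainLang ℓ c := rfl
        _ ≤ block {b | b ∈ ℓ} a ^ c ℓ.length * block {b | b ∈ ℓ} a :=
          mul_le_mul_right ((chainLang_le_starLang ℓ c).trans (starLang_le_block _ a)) _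
        _ = block {b | b ∈ ℓ} a ^ (c ℓ.length + 1) := (pow_succ _ _).symm
        _ ≤ block {b | b ∈ ℓ} a ^ d ℓ.length := pow_le_pow_right' one_le_block hlt
        _ ≤ block {b | b ∈ ℓ} a ^ d ℓ.length * chainLang ℓ d :=
          le_mul_of_one_le_right' (one_le_of_isIdeal (isIdeal_chainLang ℓ d))
    · show block _ a ^ c ℓ.length * chainLang ℓ c ≤ block _ a ^ d ℓ.length * chainLang ℓ d
      rw [heq]
      exact mul_le_mul_right (chainLang_mono hle) _

theorem evalDigits_le_of_chainWitness_mem : ∀ {ℓ : List σ}, ℓ.Nodup → ∀ {c d : ℕ → ℕ},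
    chainWitness ℓ d ∈ chainLang ℓ c → evalDigits ℓ.length d ≤ evalDigits ℓ.length c
  | [], _, _, _, _ => le_rfl
  | a :: ℓ, hℓ, c, d, h => by
    obtain ⟨haℓ, hℓ⟩ := List.nodup_cons.1 hℓ
    have ha : a ∉ chainWitness ℓ d := fun ha =>
      haℓ (chainLang_le_starLang ℓ d (chainWitness_mem ℓ d) a ha)
    replace h : List.replicate (d ℓ.length) a ++ chainWitness ℓ d ∈
        block {b | b ∈ ℓ} a ^ c ℓ.length * chainLang ℓ c := h
    refine evalDigits_succ_le_iff.2 ?_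
    rcases replicate_append_mem_block_pow_mul (Γ := {b | b ∈ ℓ}) haℓ
      (chainLang_le_starLang ℓ c) ha h with hlt | ⟨heq, hmem⟩
    exacts [Or.inl hlt, Or.inr ⟨heq, evalDigits_le_of_chainWitness_mem hℓ hmem⟩]

theorem chainLang_lt {ℓ : List σ} (hℓ : ℓ.Nodup) {c d : ℕ → ℕ}
    (h : evalDigits ℓ.length c < evalDigits ℓ.length d) : chainLang ℓ c < chainLang ℓ d :=
  lt_of_le_not_ge (chainLang_mono h.le) fun hdc =>
    h.not_ge (evalDigits_le_of_chainWitness_mem hℓ (hdc (chainWitness_mem ℓ d)))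

def topIdeal : Idl (Words σ) := ⟨starLang Set.univ, isIdeal_starLang _⟩

theorem isTop_topIdeal : IsTop (topIdeal : Idl (Words σ)) := fun _ _ _ a _ => Set.mem_univ a

def chainIdeal (ℓ : List σ) (c : ℕ → ℕ) : Idl (Words σ) := ⟨chainLang ℓ c, isIdeal_chainLang ℓ c⟩

theorem omega0_opow_le_rank_topIdeal [Fintype σ] [Nonempty σ] :
    ω ^ (Fintype.card σ : Ordinal) ≤ IsWellFounded.rank (· < ·) (topIdeal : Idl (Words σ)) := by
  set ℓ := (Finset.univ : Finset σ).toList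
  have hlen : ℓ.length = Fintype.card σ := Finset.length_toList _
  have hlt (c d : ℕ → ℕ) (h : evalDigits (Fintype.card σ) c < evalDigits (Fintype.card σ) d) :
      chainIdeal ℓ c < chainIdeal ℓ d :=
    chainLang_lt (Finset.nodup_toList _) (hlen ▸ h)
  refine le_of_forall_lt fun β hβ => ?_
  obtain ⟨c, rfl⟩ := exists_evalDigits_eq hβ
  obtain ⟨d, hd⟩ := exists_evalDigits_eq ((isSuccLimit_opow_left isSuccLimit_omega0
    (Nat.cast_ne_zero.2 Fintype.card_ne_zero)).succ_lt hβ)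
  calc evalDigits (Fintype.card σ) c
      ≤ IsWellFounded.rank (· < ·) (chainIdeal ℓ c) :=
        le_rank_of_lt_imp_lt (chainIdeal ℓ) (evalDigits _) hlt
          (fun i _ hβ => exists_evalDigits_eq (hβ.trans (evalDigits_lt _ i))) c
    _ < IsWellFounded.rank (· < ·) topIdeal := IsWellFounded.rank_lt_of_rel
        ((hlt c d (hd ▸ Order.lt_succ _)).trans_le (isTop_topIdeal _))

end Words

/-- For a finite nonempty alphabet `σ`, the rank of the set of ideals of
`(σ*, ⪯)` ordered by inclusion is `ω^|σ| + 1`. -/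
theorem rank_ideals_words {σ : Type*} [Fintype σ] [Nonempty σ] :
    (⨆ I : Idl (Words σ), Order.succ (rk I)) =
      Ordinal.omega0 ^ (Fintype.card σ : Ordinal) + 1 := by
  simp_rw [rk_eq_rank]
  rw [iSup_succ_rank_eq_of_isTop Words.isTop_topIdeal, ← Order.succ_eq_add_one,
    le_antisymm (Words.rank_le_omega0_opow _) Words.omega0_opow_le_rank_topIdeal]
end
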